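/- With 𝐀_F as above, the Frobenius norm satisfies ‖𝐀_F‖_F² ≤ (n²m/N²)·((1/C(N,n)) ∑_{I⊆[N],|I|=n} σ_min^{-2}(X_{I,F}))². -/

import Mathlib

/-!
Write `G_I = X_{I,F}ᵀ X_{I,F}`. The `(I, I')` summand of `𝐀_F` vanishes outside the rows `I` and
columns `I'`, and exactly `n C(N,n) / N` of the sets `I` contain a given row, so Cauchy–Schwarz on
each entry bounds `‖𝐀_F‖_F²` by `C(N,n)⁻⁴ (n C(N,n) / N)²` times the sum of the squared Frobenius
norms of the summands. As `R_I` has orthonormal rows, such a norm is `tr (G_I⁻¹ G_{I'}⁻¹)`, and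
`G_I⁻¹ ≤ σ_min⁻²(X_{I,F})` as quadratic forms bounds that trace by
`m σ_min⁻²(X_{I,F}) σ_min⁻²(X_{I',F})`.
-/

open Finset Matrix

/-- Row/coordinate selection matrix R_I ∈ ℝ^{k×N} for a size-k subset I of Fin N. -/
noncomputable def selMat {N k : ℕ} (I : Finset (Fin N)) (h : I.card = k) :
    Matrix (Fin k) (Fin N) ℝ :=
  Matrix.of fun a j => if (↑(I.orderIsoOfFin h a) : Fin N) = j then (1 : ℝ) else 0

/-- Minipatch submatrix X_{I,F} = R_I X R_Fᵀ. -/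
noncomputable def mpMat (N M n m : ℕ) (X : Matrix (Fin N) (Fin M) ℝ)
    (F : Finset (Fin M)) (hF : F.card = m) (I : Finset (Fin N)) (hI : I.card = n) :
    Matrix (Fin n) (Fin m) ℝ :=
  selMat I hI * X * (selMat F hF)ᵀ

/-- Smallest squared singular value σ_min(A)², via the Rayleigh quotient. -/
noncomputable def sminSq {n m : ℕ} (A : Matrix (Fin n) (Fin m) ℝ) : ℝ :=
  ⨅ v : {v : Fin m → ℝ // ∑ j, (v j) ^ 2 = 1}, ∑ i, (A.mulVec v.1 i) ^ 2

/-- The matrix 𝐀_F = (1/C(N,n)²) ∑_{I,I'} R_Iᵀ X_{I,F}(X_{I,F}ᵀX_{I,F})⁻¹(X_{I',F}ᵀX_{I',F})⁻¹X_{I',F}ᵀ R_{I'}. -/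
noncomputable def AF (N M n m : ℕ) (X : Matrix (Fin N) (Fin M) ℝ)
    (F : Finset (Fin M)) (hF : F.card = m) : Matrix (Fin N) (Fin N) ℝ :=
  ((N.choose n : ℝ) ^ 2)⁻¹ •
    ∑ I ∈ (Finset.powersetCard n (Finset.univ : Finset (Fin N))).attach,
      ∑ J ∈ (Finset.powersetCard n (Finset.univ : Finset (Fin N))).attach,
        (selMat I.1 (Finset.mem_powersetCard.mp I.2).2)ᵀ *
          mpMat N M n m X F hF I.1 (Finset.mem_powersetCard.mp I.2).2 *
          ((mpMat N M n m X F hF I.1 (Finset.mem_powersetCard.mp I.2).2)ᵀ *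
            mpMat N M n m X F hF I.1 (Finset.mem_powersetCard.mp I.2).2)⁻¹ *
          ((mpMat N M n m X F hF J.1 (Finset.mem_powersetCard.mp J.2).2)ᵀ *
            mpMat N M n m X F hF J.1 (Finset.mem_powersetCard.mp J.2).2)⁻¹ *
          (mpMat N M n m X F hF J.1 (Finset.mem_powersetCard.mp J.2).2)ᵀ *
          selMat J.1 (Finset.mem_powersetCard.mp J.2).2

section Frobenius

variable {ι κ : Type*} [Fintype ι] [Fintype κ]

theorem sum_sq_eq_trace_transpose_mul (A : Matrix ι κ ℝ) :
    ∑ i, ∑ j, A i j ^ 2 = trace (Aᵀ * A) := by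
  simp only [trace, diag_apply, mul_apply, transpose_apply, sq]
  exact Finset.sum_comm

theorem sum_sq_mulVec_le (B : Matrix ι κ ℝ) (u : κ → ℝ) :
    ∑ i, (B *ᵥ u) i ^ 2 ≤ (∑ i, ∑ j, B i j ^ 2) * ∑ j, u j ^ 2 := by
  rw [Finset.sum_mul]
  exact Finset.sum_le_sum fun i _ => Finset.sum_mul_sq_le_sq_mul_sq _ _ _

end Frobenius

section SminSq

variable {n m : ℕ}

theorem sminSq_mul_sum_sq_le (A : Matrix (Fin n) (Fin m) ℝ) (v : Fin m → ℝ) :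
    sminSq A * ∑ j, v j ^ 2 ≤ ∑ i, (A *ᵥ v) i ^ 2 := by
  set c := ∑ j, v j ^ 2
  obtain hc | hc : 0 = c ∨ 0 < c := (Finset.sum_nonneg fun j _ => sq_nonneg (v j)).eq_or_lt
  · rw [← hc, mul_zero]; positivity
  have hunit : ∑ j, ((√c)⁻¹ • v) j ^ 2 = 1 := by
    simp only [Pi.smul_apply, smul_eq_mul, mul_pow, ← Finset.mul_sum, inv_pow,
      Real.sq_sqrt hc.le]
    exact inv_mul_cancel₀ hc.ne'
  have hle : sminSq A ≤ ∑ i, (A *ᵥ ((√c)⁻¹ • v)) i ^ 2 :=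
    ciInf_le (f := fun u : {u : Fin m → ℝ // ∑ j, u j ^ 2 = 1} => ∑ i, (A *ᵥ u.1) i ^ 2)
      ⟨0, by rintro _ ⟨u, rfl⟩; positivity⟩ ⟨_, hunit⟩
  simp only [mulVec_smul, Pi.smul_apply, smul_eq_mul, mul_pow, ← Finset.mul_sum, inv_pow,
    Real.sq_sqrt hc.le] at hle
  rwa [← div_eq_inv_mul, le_div_iff₀ hc] at hle

theorem sminSq_pos (hm : 0 < m) (A : Matrix (Fin n) (Fin m) ℝ) (h : IsUnit (Aᵀ * A).det) :
    0 < sminSq A := by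
  set B := (Aᵀ * A)⁻¹ * Aᵀ
  have hBA : B * A = 1 := by rw [Matrix.mul_assoc, nonsing_inv_mul _ h]
  set c := ∑ i, ∑ j, B i j ^ 2
  have hleft_inv (v : Fin m → ℝ) : ∑ j, v j ^ 2 ≤ c * ∑ i, (A *ᵥ v) i ^ 2 := by
    simpa [mulVec_mulVec, hBA] using sum_sq_mulVec_le B (A *ᵥ v)
  have hunit : ∑ j, (Pi.single ⟨0, hm⟩ 1 : Fin m → ℝ) j ^ 2 = 1 := by
    simp [Pi.single_apply, sq]
  have hc : 0 < c := by
    refine lt_of_le_of_ne (by positivity) fun hc0 => ?_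
    have := hleft_inv (Pi.single ⟨0, hm⟩ 1)
    rw [hunit, ← hc0, zero_mul] at this
    linarith
  have : Nonempty {v : Fin m → ℝ // ∑ j, v j ^ 2 = 1} := ⟨⟨_, hunit⟩⟩
  refine (inv_pos.2 hc).trans_le (le_ciInf fun v => ?_)
  rw [inv_le_iff_one_le_mul₀' hc]
  simpa [v.2] using hleft_inv v.1

end SminSq

section Gram

variable {ι : Type*} [Fintype ι] {n m : ℕ}

theorem dotProduct_gram_mulVec {κ : Type*} [Fintype κ] (A : Matrix ι κ ℝ) (w : κ → ℝ) :
    w ⬝ᵥ (Aᵀ * A) *ᵥ w = ∑ i, (A *ᵥ w) i ^ 2 := by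
  rw [← mulVec_mulVec, dotProduct_mulVec, vecMul_transpose]
  simp only [dotProduct, sq]

theorem dotProduct_inv_gram_mulVec_le (hm : 0 < m) (A : Matrix (Fin n) (Fin m) ℝ)
    (h : IsUnit (Aᵀ * A).det) (v : Fin m → ℝ) :
    v ⬝ᵥ (Aᵀ * A)⁻¹ *ᵥ v ≤ (sminSq A)⁻¹ * ∑ j, v j ^ 2 := by
  set w := (Aᵀ * A)⁻¹ *ᵥ v
  have hv : (Aᵀ * A) *ᵥ w = v := by
    rw [mulVec_mulVec, mul_nonsing_inv _ h, one_mulVec]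
  have hs := sminSq_pos hm A h
  have hvw : v ⬝ᵥ w = ∑ i, (A *ᵥ w) i ^ 2 := by
    rw [← dotProduct_gram_mulVec, hv, dotProduct_comm]
  -- with `s = sminSq A`: `s‖w‖² ≤ ⟪v, w⟫` and Cauchy–Schwarz `⟪v, w⟫² ≤ ‖v‖²‖w‖²`
  -- give `s⟪v, w⟫ ≤ ‖v‖²`
  have hlow : sminSq A * ∑ j, w j ^ 2 ≤ v ⬝ᵥ w := hvw ▸ sminSq_mul_sum_sq_le A w
  have hcs : (v ⬝ᵥ w) ^ 2 ≤ (∑ j, v j ^ 2) * ∑ j, w j ^ 2 :=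
    Finset.sum_mul_sq_le_sq_mul_sq _ _ _
  have hnonneg : 0 ≤ v ⬝ᵥ w := hvw ▸ by positivity
  rw [inv_mul_eq_div, le_div_iff₀ hs]
  rcases hnonneg.eq_or_lt with h0 | hpos
  · rw [← h0, zero_mul]; positivity
  refine le_of_mul_le_mul_left ?_ hpos
  nlinarith [mul_le_mul_of_nonneg_left hlow (by positivity : (0 : ℝ) ≤ ∑ j, v j ^ 2),
    mul_le_mul_of_nonneg_left hcs hs.le]

theorem trace_mul_inv_gram_mul_transpose_le (hm : 0 < m) (A : Matrix (Fin n) (Fin m) ℝ)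
    (h : IsUnit (Aᵀ * A).det) (Y : Matrix ι (Fin m) ℝ) :
    trace (Y * (Aᵀ * A)⁻¹ * Yᵀ) ≤ (sminSq A)⁻¹ * trace (Yᵀ * Y) := by
  have hdiag (i : ι) : (Y * (Aᵀ * A)⁻¹ * Yᵀ) i i = Y i ⬝ᵥ (Aᵀ * A)⁻¹ *ᵥ Y i := by
    simp only [mul_apply, dotProduct, mulVec, transpose_apply, Finset.mul_sum, Finset.sum_mul]
    rw [Finset.sum_comm]
    simp only [mul_assoc]
  rw [← sum_sq_eq_trace_transpose_mul, Finset.mul_sum]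
  exact Finset.sum_le_sum fun i _ =>
    (hdiag i).trans_le (dotProduct_inv_gram_mulVec_le hm A h (Y i))

theorem trace_inv_gram_mul_inv_gram_le (hm : 0 < m) (A B : Matrix (Fin n) (Fin m) ℝ)
    (hA : IsUnit (Aᵀ * A).det) (hB : IsUnit (Bᵀ * B).det) :
    trace ((Aᵀ * A)⁻¹ * (Bᵀ * B)⁻¹) ≤ m * (sminSq A)⁻¹ * (sminSq B)⁻¹ := by
  set Y := B * (Bᵀ * B)⁻¹
  have hY : Yᵀ * Y = (Bᵀ * B)⁻¹ := by
    rw [transpose_mul, transpose_nonsing_inv, transpose_mul, transpose_transpose,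
      Matrix.mul_assoc, ← Matrix.mul_assoc Bᵀ, mul_nonsing_inv _ hB, Matrix.mul_one]
  have htrB : trace (Bᵀ * B)⁻¹ ≤ (sminSq B)⁻¹ * m := by
    simpa using trace_mul_inv_gram_mul_transpose_le hm B hB (1 : Matrix (Fin m) (Fin m) ℝ)
  calc trace ((Aᵀ * A)⁻¹ * (Bᵀ * B)⁻¹) = trace (Y * (Aᵀ * A)⁻¹ * Yᵀ) := by
        rw [← hY, ← Matrix.mul_assoc, trace_mul_comm, ← Matrix.mul_assoc]
    _ ≤ (sminSq A)⁻¹ * trace (Bᵀ * B)⁻¹ := hY ▸ trace_mul_inv_gram_mul_transpose_le hm A hA Y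
    _ ≤ (sminSq A)⁻¹ * ((sminSq B)⁻¹ * m) := by
        gcongr
        exact inv_nonneg.2 (sminSq_pos hm A hA).le
    _ = m * (sminSq A)⁻¹ * (sminSq B)⁻¹ := by ring

end Gram

section Sandwich

variable {k k' ι ι' μ : Type*} [Fintype k] [Fintype k'] [Fintype ι] [Fintype ι'] [Fintype μ]

theorem sum_sq_transpose_mul_mul_eq [DecidableEq k] [DecidableEq k'] (P : Matrix k ι ℝ)
    (Q : Matrix k' ι' ℝ) (hP : P * Pᵀ = 1) (hQ : Q * Qᵀ = 1) (U : Matrix k k' ℝ) :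
    ∑ i, ∑ j, (Pᵀ * U * Q) i j ^ 2 = ∑ i, ∑ j, U i j ^ 2 := by
  simp only [sum_sq_eq_trace_transpose_mul, transpose_mul, transpose_transpose, Matrix.mul_assoc]
  rw [← Matrix.mul_assoc P, hP, Matrix.one_mul, trace_mul_comm, Matrix.mul_assoc,
    Matrix.mul_assoc, hQ, Matrix.mul_one]

variable [DecidableEq μ]

theorem sum_sq_mul_inv_gram_mul_inv_gram_mul_transpose (A : Matrix k μ ℝ) (B : Matrix k' μ ℝ)
    (hA : IsUnit (Aᵀ * A).det) (hB : IsUnit (Bᵀ * B).det) :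
    ∑ i, ∑ j, (A * (Aᵀ * A)⁻¹ * (Bᵀ * B)⁻¹ * Bᵀ) i j ^ 2 =
      trace ((Aᵀ * A)⁻¹ * (Bᵀ * B)⁻¹) := by
  simp only [sum_sq_eq_trace_transpose_mul, transpose_mul, transpose_transpose,
    transpose_nonsing_inv, Matrix.mul_assoc]
  rw [← Matrix.mul_assoc Aᵀ A, ← Matrix.mul_assoc (Aᵀ * A)⁻¹, nonsing_inv_mul _ hA,
    Matrix.one_mul, trace_mul_comm]
  simp only [Matrix.mul_assoc]
  rw [nonsing_inv_mul _ hB, Matrix.mul_one, trace_mul_comm]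

end Sandwich

section Selection

variable {N k : ℕ}

theorem selMat_mul_transpose (I : Finset (Fin N)) (h : I.card = k) :
    selMat I h * (selMat I h)ᵀ = 1 := by
  ext a b
  simp only [selMat, mul_apply, transpose_apply, of_apply, one_apply, ite_mul, one_mul,
    zero_mul, Finset.sum_ite_eq, Finset.mem_univ, if_true, Subtype.coe_inj,
    (I.orderIsoOfFin h).injective.eq_iff]
  exact if_congr eq_comm rfl rfl

theorem selMat_apply_of_notMem {I : Finset (Fin N)} (h : I.card = k) (a : Fin k) {j : Fin N}
    (hj : j ∉ I) : selMat I h a j = 0 :=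
  if_neg fun he : ((I.orderIsoOfFin h a : I) : Fin N) = j => hj (he ▸ (I.orderIsoOfFin h a).2)

theorem transpose_selMat_mul_apply_of_notMem {ι : Type*} {I : Finset (Fin N)} (h : I.card = k)
    (Z : Matrix (Fin k) ι ℝ) {i : Fin N} (hi : i ∉ I) (j : ι) :
    ((selMat I h)ᵀ * Z) i j = 0 :=
  (mul_apply ..).trans <| Finset.sum_eq_zero fun a _ => by
    rw [transpose_apply, selMat_apply_of_notMem h a hi, zero_mul]

theorem mul_selMat_apply_of_notMem {ι : Type*} {J : Finset (Fin N)} (h : J.card = k)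
    (Z : Matrix ι (Fin k) ℝ) (i : ι) {j : Fin N} (hj : j ∉ J) :
    (Z * selMat J h) i j = 0 :=
  (mul_apply ..).trans <| Finset.sum_eq_zero fun a _ => by
    rw [selMat_apply_of_notMem h a hj, mul_zero]

theorem transpose_selMat_mul_mul_selMat_apply_ne_zero {k' : ℕ} {I J : Finset (Fin N)}
    (hI : I.card = k) (hJ : J.card = k') (U : Matrix (Fin k) (Fin k') ℝ) {i j : Fin N}
    (h : ((selMat I hI)ᵀ * U * selMat J hJ) i j ≠ 0) : i ∈ I ∧ j ∈ J := by
  constructor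
  · by_contra hi
    rw [Matrix.mul_assoc, transpose_selMat_mul_apply_of_notMem hI _ hi] at h
    exact h rfl
  · by_contra hj
    exact h (mul_selMat_apply_of_notMem hJ _ i hj)

end Selection

theorem card_mul_card_filter_mem_powersetCard {α : Type*} [Fintype α] [DecidableEq α]
    (n : ℕ) (a : α) :
    Fintype.card α * #{s ∈ powersetCard n univ | a ∈ s} = n * (Fintype.card α).choose n := by
  cases n with
  | zero => simp
  | succ k =>
    obtain ⟨N, hN⟩ := Nat.exists_eq_add_one_of_ne_zero (Fintype.card_pos_iff.2 ⟨a⟩).ne'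
    have := card_filter_powersetCard_subset {a} univ (k + 1) (subset_univ _) (by simp)
    simp only [singleton_subset_iff, card_singleton, card_univ, hN] at this
    rw [this, hN, Nat.add_sub_cancel, Nat.add_sub_cancel, Nat.add_one_mul_choose_eq, mul_comm]

theorem card_filter_mem_attach_powersetCard {α : Type*} [Fintype α] [DecidableEq α]
    (n : ℕ) (a : α) :
    (#{I ∈ (powersetCard n (univ : Finset α)).attach | a ∈ I.1} : ℝ) =
      n * (Fintype.card α).choose n / Fintype.card α := by
  have hcard : (Fintype.card α : ℝ) ≠ 0 := Nat.cast_ne_zero.2 (Fintype.card_pos_iff.2 ⟨a⟩).ne'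
  rw [filter_attach (a ∈ ·), card_map, card_attach, eq_div_iff hcard, mul_comm]
  exact_mod_cast card_mul_card_filter_mem_powersetCard n a

theorem sum_sq_sum_sum_apply_le {ι α : Type*} [Fintype α] [DecidableEq α] (s : Finset ι)
    (S : ι → Finset α) (T : ι → ι → Matrix α α ℝ)
    (hT : ∀ I J i j, T I J i j ≠ 0 → i ∈ S I ∧ j ∈ S J) (D : ℝ)
    (hD : ∀ i, (#{I ∈ s | i ∈ S I} : ℝ) ≤ D) :
    ∑ i, ∑ j, (∑ I ∈ s, ∑ J ∈ s, T I J i j) ^ 2 ≤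
      D ^ 2 * ∑ I ∈ s, ∑ J ∈ s, ∑ i, ∑ j, T I J i j ^ 2 := by
  have pointwise (i j : α) : (∑ I ∈ s, ∑ J ∈ s, T I J i j) ^ 2 ≤
      D ^ 2 * ∑ I ∈ s, ∑ J ∈ s, T I J i j ^ 2 := by
    have hsupp : ∑ I ∈ s, ∑ J ∈ s, T I J i j =
        ∑ x ∈ {I ∈ s | i ∈ S I} ×ˢ {J ∈ s | j ∈ S J}, T x.1 x.2 i j := by
      rw [sum_product, ← sum_filter_of_ne (p := fun I => i ∈ S I)]
      · refine sum_congr rfl fun I _ => (sum_filter_of_ne fun J _ hJ => (hT I J i j hJ).2).symm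
      · intro I _ hI
        obtain ⟨J, -, hJ⟩ := exists_ne_zero_of_sum_ne_zero hI
        exact (hT I J i j hJ).1
    have hcard : (#({I ∈ s | i ∈ S I} ×ˢ {J ∈ s | j ∈ S J}) : ℝ) ≤ D ^ 2 := by
      rw [card_product, Nat.cast_mul, sq]
      exact mul_le_mul (hD i) (hD j) (Nat.cast_nonneg _) ((Nat.cast_nonneg _).trans (hD i))
    rw [hsupp]
    refine sq_sum_le_card_mul_sum_sq.trans (mul_le_mul hcard ?_ (by positivity) (by positivity))
    rw [← sum_product']
    exact sum_le_sum_of_subset_of_nonneg (product_subset_product (filter_subset _ _)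
      (filter_subset _ _)) fun _ _ _ => sq_nonneg _
  calc ∑ i, ∑ j, (∑ I ∈ s, ∑ J ∈ s, T I J i j) ^ 2
      ≤ ∑ i, ∑ j, D ^ 2 * ∑ I ∈ s, ∑ J ∈ s, T I J i j ^ 2 :=
        sum_le_sum fun i _ => sum_le_sum fun j _ => pointwise i j
    _ = D ^ 2 * ∑ I ∈ s, ∑ J ∈ s, ∑ i, ∑ j, T I J i j ^ 2 := by
        simp only [← mul_sum]
        congr 1
        rw [sum_congr rfl fun i _ => sum_comm, sum_comm]
        refine sum_congr rfl fun I _ => ?_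
        rw [sum_congr rfl fun i _ => sum_comm, sum_comm]

theorem frobenius_AF_le_general (N M n m : ℕ) (hm : 0 < m)
    (X : Matrix (Fin N) (Fin M) ℝ) (F : Finset (Fin M)) (hF : F.card = m)
    (hrank : ∀ (I : Finset (Fin N)) (hI : I.card = n),
      IsUnit ((mpMat N M n m X F hF I hI)ᵀ * mpMat N M n m X F hF I hI).det) :
    (∑ i, ∑ j, (AF N M n m X F hF i j) ^ 2)
      ≤ ((n : ℝ) ^ 2 * m / (N : ℝ) ^ 2) *
          ((N.choose n : ℝ)⁻¹ *
            ∑ I ∈ (Finset.powersetCard n (Finset.univ : Finset (Fin N))).attach,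
              (sminSq (mpMat N M n m X F hF I.1 (Finset.mem_powersetCard.mp I.2).2))⁻¹) ^ 2 := by
  set Q := powersetCard n (univ : Finset (Fin N))
  set P := Q.attach
  set C : ℝ := (N.choose n : ℝ)
  have hcard (I : Q) : I.1.card = n := (mem_powersetCard.mp I.2).2
  set Xs := fun I : Q => mpMat N M n m X F hF I.1 (hcard I)
  set σ := fun I : Q => (sminSq (Xs I))⁻¹
  set T := fun I J : Q => (selMat I.1 (hcard I))ᵀ *
    (Xs I * ((Xs I)ᵀ * Xs I)⁻¹ * ((Xs J)ᵀ * Xs J)⁻¹ * (Xs J)ᵀ) * selMat J.1 (hcard J)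
  have hAF (i j : Fin N) : AF N M n m X F hF i j = (C ^ 2)⁻¹ * ∑ I ∈ P, ∑ J ∈ P, T I J i j := by
    simp only [AF, T, Matrix.smul_apply, Matrix.sum_apply, smul_eq_mul, Matrix.mul_assoc]
    rfl
  have hT (I J : Q) : ∑ i, ∑ j, T I J i j ^ 2 ≤ m * σ I * σ J := by
    rw [sum_sq_transpose_mul_mul_eq _ _ (selMat_mul_transpose _ _) (selMat_mul_transpose _ _),
      sum_sq_mul_inv_gram_mul_inv_gram_mul_transpose _ _ (hrank _ _) (hrank _ _)]
    exact trace_inv_gram_mul_inv_gram_le hm _ _ (hrank _ _) (hrank _ _)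
  have hcount (i : Fin N) : (#{I ∈ P | i ∈ I.1} : ℝ) ≤ n * C / N := by
    simpa using (card_filter_mem_attach_powersetCard n i).le
  calc ∑ i, ∑ j, AF N M n m X F hF i j ^ 2
      = ((C ^ 2)⁻¹) ^ 2 * ∑ i, ∑ j, (∑ I ∈ P, ∑ J ∈ P, T I J i j) ^ 2 := by
        simp only [hAF, mul_pow, ← mul_sum]
    _ ≤ ((C ^ 2)⁻¹) ^ 2 * ((n * C / N) ^ 2 * ∑ I ∈ P, ∑ J ∈ P, ∑ i, ∑ j, T I J i j ^ 2) := by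
        gcongr
        exact sum_sq_sum_sum_apply_le P (fun I => I.1) T
          (fun I J _ _ h => transpose_selMat_mul_mul_selMat_apply_ne_zero _ _ _ h) _ hcount
    _ ≤ ((C ^ 2)⁻¹) ^ 2 * ((n * C / N) ^ 2 * ∑ I ∈ P, ∑ J ∈ P, m * σ I * σ J) := by
        gcongr with I _ J _
        exact hT I J
    _ = _ := by
        simp only [mul_assoc, ← mul_sum, ← sum_mul]
        rcases eq_or_ne C 0 with hC | hC
        · simp [hC]
        · field_simp

/-- ‖𝐀_F‖_F² ≤ (n²m/N²)·((1/C(N,n)) ∑_I σ_min⁻²(X_{I,F}))². -/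
theorem frobenius_AF_le (N M n m : ℕ) (hm : 0 < m) (hmn : m ≤ n) (hn : n ≤ N)
    (X : Matrix (Fin N) (Fin M) ℝ) (F : Finset (Fin M)) (hF : F.card = m)
    (hrank : ∀ (I : Finset (Fin N)) (hI : I.card = n),
      IsUnit ((mpMat N M n m X F hF I hI)ᵀ * mpMat N M n m X F hF I hI).det) :
    (∑ i, ∑ j, (AF N M n m X F hF i j) ^ 2)
      ≤ ((n : ℝ) ^ 2 * m / (N : ℝ) ^ 2) *
          ((N.choose n : ℝ)⁻¹ *
            ∑ I ∈ (Finset.powersetCard n (Finset.univ : Finset (Fin N))).attach,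
              (sminSq (mpMat N M n m X F hF I.1 (Finset.mem_powersetCard.mp I.2).2))⁻¹) ^ 2 :=
  frobenius_AF_le_general N M n m hm X F hF hrank
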